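/- arXiv:2309.05639 — 3 statements merged into one kernel-verified Lean document; each statement's English description precedes it below -/
import Mathlib

section
/- Theorem 2 (Unbiasedness for deterministic-trend DGPs): Let b_0,…,b_q : ℕ → ℝ with b_0 ≡ 1, let T := {τ−R+1,…,τ} with R ≥ q+1, let X be the R×(q+1) matrix X_{s,k} = b_k(t_s) for t_s ∈ T, assume XᵀX is invertible, let H_k := b_k(τ+h), and define the forecast weights w := H·(XᵀX)⁻¹·Xᵀ. Suppose y_t = y¹_t + y²_t + y³_t for all t, where (y¹_t) is integrable with E[y¹_t] = μ for every t ∈ T ∪ {τ+h}, (y²_t)_{t∈ℕ} is an integrable random walk y²_t = y²_{t−1} + u_t with E[u_t] = 0 for all t ≥ 1, and y³_t = Σ_{k=0}^{q₀} c_k·b_k(t) is a deterministic trend with q₀ ≤ q. Then E[Σ_{t∈T} w_t·y_t − y_{τ+h}] = 0. -/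
open MeasureTheory Matrix

/-! The least-squares forecast weights `w = H (XᵀX)⁻¹ Xᵀ` satisfy `wᵀ X = H`, so the forecast
reproduces every function in the span of the basis exactly; since `b 0 ≡ 1`, this includes
every constant plus the deterministic trend. The mean of `y t` on the estimation window and at
the target date is such a function: `y1` has constant mean `m`, the random walk `y2` has
constant mean `E[y2 0]` because its innovations are centred, and `y3` is the trend. Taking
expectations, the forecast error therefore has mean zero. -/

theorem Matrix.vecMul_olsWeights_mul {m n R : Type*} [Fintype m] [Fintype n] [DecidableEq n]
    [CommRing R] (X : Matrix m n R) (hX : IsUnit (Xᵀ * X)) (H : n → R) :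
    vecMul (vecMul H ((Xᵀ * X)⁻¹ * Xᵀ)) X = H := by
  rw [vecMul_vecMul, Matrix.mul_assoc, nonsing_inv_mul _ ((isUnit_iff_isUnit_det _).mp hX),
    vecMul_one]

section Reproduction

variable {ι κ K α S : Type*} [Fintype ι] [Fintype κ] [CommSemiring S]

theorem sum_mul_linearCombination_eq_of_reproduces (w : ι → S) (t : ι → α) (t₀ : α)
    (f : κ → α → S) (hf : ∀ k, ∑ s, w s * f k (t s) = f k t₀) (c : κ → S) :
    ∑ s, w s * ∑ k, c k * f k (t s) = ∑ k, c k * f k t₀ := by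
  simp_rw [Finset.mul_sum]
  rw [Finset.sum_comm]
  refine Finset.sum_congr rfl fun k _ => ?_
  rw [← hf k, Finset.mul_sum]
  exact Finset.sum_congr rfl fun s _ => mul_left_comm _ _ _

theorem sum_mul_const_add_trend_eq_of_reproduces (w : ι → S) (t : ι → α) (t₀ : α)
    (b : K → α → S) (k₀ : K) (hb : ∀ x, b k₀ x = 1)
    (hrep : ∀ k, ∑ s, w s * b k (t s) = b k t₀) (M : S) (e : κ → K) (c : κ → S) :
    ∑ s, w s * (M + ∑ j, c j * b (e j) (t s)) = M + ∑ j, c j * b (e j) t₀ := by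
  have hw : ∑ s, w s = 1 := by simpa only [hb, mul_one] using hrep k₀
  rw [← sum_mul_linearCombination_eq_of_reproduces w t t₀ (fun j => b (e j)) (fun j => hrep _) c]
  simp only [mul_add, Finset.sum_add_distrib, ← Finset.sum_mul, hw, one_mul]

end Reproduction

section Expectation

variable {Ω : Type*} [MeasurableSpace Ω] {μ : Measure Ω}

theorem integral_eq_integral_zero_of_centred_increments {Y U : ℕ → Ω → ℝ}
    (hY : ∀ t, Integrable (Y t) μ) (hU : ∀ t, Integrable (U (t + 1)) μ)
    (hstep : ∀ t ω, Y (t + 1) ω = Y t ω + U (t + 1) ω) (hU0 : ∀ t, ∫ ω, U (t + 1) ω ∂μ = 0)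
    (t : ℕ) : ∫ ω, Y t ω ∂μ = ∫ ω, Y 0 ω ∂μ := by
  induction t with
  | zero => rfl
  | succ n ih =>
    simp_rw [hstep n]
    rw [integral_add (hY n) (hU n), hU0 n, ih, add_zero]

theorem integral_sum_mul_sub {ι : Type*} [Fintype ι] (w : ι → ℝ) {Y : ι → Ω → ℝ} {Z : Ω → ℝ}
    (hY : ∀ s, Integrable (Y s) μ) (hZ : Integrable Z μ) :
    ∫ ω, (∑ s, w s * Y s ω - Z ω) ∂μ = ∑ s, w s * ∫ ω, Y s ω ∂μ - ∫ ω, Z ω ∂μ := by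
  have hterm : ∀ s ∈ Finset.univ, Integrable (fun ω => w s * Y s ω) μ :=
    fun s _ => (hY s).const_mul _
  rw [integral_sub (integrable_finsetSum _ hterm) hZ, integral_finsetSum _ hterm]
  simp only [integral_const_mul]

theorem integral_add_add_const [IsProbabilityMeasure μ] {X Y : Ω → ℝ}
    (hX : Integrable X μ) (hY : Integrable Y μ) (a : ℝ) :
    ∫ ω, (X ω + Y ω + a) ∂μ = ∫ ω, X ω ∂μ + ∫ ω, Y ω ∂μ + a := by
  rw [integral_add (f := fun ω => X ω + Y ω) (hX.add hY) (integrable_const a), integral_add hX hY, integral_const,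
    probReal_univ, one_smul]

end Expectation

theorem forecast_unbiased_deterministic_trend_general
    {Ω : Type*} [MeasurableSpace Ω] (μ : Measure Ω) [IsProbabilityMeasure μ]
    (τ h R q : ℕ) (hRτ : R ≤ τ)
    (b : Fin (q + 1) → ℕ → ℝ) (hb0 : ∀ t : ℕ, b 0 t = 1)
    (X : Matrix (Fin R) (Fin (q + 1)) ℝ)
    (hX : ∀ (s : Fin R) (k : Fin (q + 1)), X s k = b k (τ - R + 1 + (s : ℕ)))
    (hinv : IsUnit (Xᵀ * X))
    (H : Fin (q + 1) → ℝ) (hH : ∀ k : Fin (q + 1), H k = b k (τ + h))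
    (w : Fin R → ℝ) (hw : w = Matrix.vecMul H ((Xᵀ * X)⁻¹ * Xᵀ))
    (y y1 y2 u : ℕ → Ω → ℝ) (y3 : ℕ → ℝ)
    (hsum : ∀ (t : ℕ) (ω : Ω), y t ω = y1 t ω + y2 t ω + y3 t)
    (hy1int : ∀ t, Integrable (y1 t) μ)
    (hy2int : ∀ t, Integrable (y2 t) μ)
    (huint : ∀ t, Integrable (u t) μ)
    (m : ℝ)
    (hstat : ∀ t ∈ Finset.Icc (τ - R + 1) τ ∪ {τ + h}, ∫ ω, y1 t ω ∂μ = m)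
    (hrw : ∀ (t : ℕ) (ω : Ω), y2 (t + 1) ω = y2 t ω + u (t + 1) ω)
    (hu0 : ∀ t : ℕ, ∫ ω, u (t + 1) ω ∂μ = 0)
    (q0 : ℕ) (hq0 : q0 ≤ q) (c : Fin (q0 + 1) → ℝ)
    (htrend : ∀ t : ℕ,
      y3 t = ∑ k : Fin (q0 + 1), c k * b (Fin.castLE (Nat.succ_le_succ hq0) k) t) :
    ∫ ω, ((∑ s : Fin R, w s * y (τ - R + 1 + (s : ℕ)) ω) - y (τ + h) ω) ∂μ
      = 0 := by
  have hy : ∀ t, y t = fun ω => y1 t ω + y2 t ω + y3 t := fun t => funext (hsum t)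
  have hyint : ∀ t, Integrable (y t) μ := fun t => by
    rw [hy t]
    exact ((hy1int t).add (hy2int t)).add (integrable_const _)
  have hmean : ∀ t ∈ Finset.Icc (τ - R + 1) τ ∪ {τ + h},
      ∫ ω, y t ω ∂μ = (m + ∫ ω, y2 0 ω ∂μ) + y3 t := fun t ht => by
    rw [hy t, integral_add_add_const (hy1int t) (hy2int t), hstat t ht,
      integral_eq_integral_zero_of_centred_increments hy2int (fun t => huint _) hrw hu0]
  have hwindow : ∀ s : Fin R, τ - R + 1 + (s : ℕ) ∈ Finset.Icc (τ - R + 1) τ ∪ {τ + h} :=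
    fun s => by grind [Fin.isLt]
  have hrep : ∀ k, ∑ s, w s * b k (τ - R + 1 + (s : ℕ)) = b k (τ + h) := fun k => by
    have hwX := congrFun (vecMul_olsWeights_mul X hinv H) k
    rw [← hw] at hwX
    simpa only [vecMul, dotProduct, hX, hH] using hwX
  rw [integral_sum_mul_sub w (fun s => hyint _) (hyint _), hmean _ (by simp)]
  simp only [hmean _ (hwindow _), htrend]
  rw [sum_mul_const_add_trend_eq_of_reproduces w _ _ b 0 hb0 hrep, sub_self]

/-- **Theorem 2: Unbiasedness for deterministic-trend DGPs.**
Let `b 0, …, b q : ℕ → ℝ` with `b 0 ≡ 1`, let `T = {τ−R+1, …, τ}` with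
`q+1 ≤ R ≤ τ`, let `X` be the `R × (q+1)` design matrix `X s k = b k (τ−R+1+s)`
with `XᵀX` invertible, let `H k = b k (τ+h)`, and define the forecast weights
`w = H (XᵀX)⁻¹ Xᵀ`. Suppose `y t = y1 t + y2 t + y3 t`, where `y1` is
integrable with constant mean `m` on `T ∪ {τ+h}`, `y2` is an integrable random
walk with mean-zero innovations, and `y3 t = ∑_{k=0}^{q0} c k • b k t` is a
deterministic trend with `q0 ≤ q`. Then `E[∑_{t∈T} w t • y t − y (τ+h)] = 0`. -/
theorem forecast_unbiased_deterministic_trend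
    {Ω : Type*} [MeasurableSpace Ω] (μ : Measure Ω) [IsProbabilityMeasure μ]
    (τ h R q : ℕ) (hτ : 1 ≤ τ) (hh : 1 ≤ h) (hR : q + 1 ≤ R) (hRτ : R ≤ τ)
    (b : Fin (q + 1) → ℕ → ℝ) (hb0 : ∀ t : ℕ, b 0 t = 1)
    (X : Matrix (Fin R) (Fin (q + 1)) ℝ)
    (hX : ∀ (s : Fin R) (k : Fin (q + 1)), X s k = b k (τ - R + 1 + (s : ℕ)))
    (hinv : IsUnit (Xᵀ * X))
    (H : Fin (q + 1) → ℝ) (hH : ∀ k : Fin (q + 1), H k = b k (τ + h))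
    (w : Fin R → ℝ) (hw : w = Matrix.vecMul H ((Xᵀ * X)⁻¹ * Xᵀ))
    (y y1 y2 u : ℕ → Ω → ℝ) (y3 : ℕ → ℝ)
    (hsum : ∀ (t : ℕ) (ω : Ω), y t ω = y1 t ω + y2 t ω + y3 t)
    (hy1int : ∀ t, Integrable (y1 t) μ)
    (hy2int : ∀ t, Integrable (y2 t) μ)
    (huint : ∀ t, Integrable (u t) μ)
    (m : ℝ)
    (hstat : ∀ t ∈ Finset.Icc (τ - R + 1) τ ∪ {τ + h}, ∫ ω, y1 t ω ∂μ = m)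
    (hrw : ∀ (t : ℕ) (ω : Ω), y2 (t + 1) ω = y2 t ω + u (t + 1) ω)
    (hu0 : ∀ t : ℕ, ∫ ω, u (t + 1) ω ∂μ = 0)
    (q0 : ℕ) (hq0 : q0 ≤ q) (c : Fin (q0 + 1) → ℝ)
    (htrend : ∀ t : ℕ,
      y3 t = ∑ k : Fin (q0 + 1), c k * b (Fin.castLE (Nat.succ_le_succ hq0) k) t) :
    ∫ ω, ((∑ s : Fin R, w s * y (τ - R + 1 + (s : ℕ)) ω) - y (τ + h) ω) ∂μ
      = 0 :=
  forecast_unbiased_deterministic_trend_general μ τ h R q hRτ b hb0 X hX hinv H hH w hw y y1 y2 u y3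
    hsum hy1int hy2int huint m hstat hrw hu0 q0 hq0 c htrend
end

section
/- Pooled-regression equivalence (second alternative, equation (19)): Consider the pooled least-squares problem minimize over β ∈ ℝ^h and α ∈ ℝ^{n×(q+1)} the objective Σ_{i=1}^n Σ_{t=τ−R+1}^{τ+h} (y_{it} − Σ_{k=1}^h 1{t = τ+k}·β_k − Σ_{k=0}^q α_{ik}·t^k)², where R ≥ q+1 and the R×(q+1) pre-treatment design matrix X with entries X_{s,k} = (τ−R+s)^k has invertible XᵀX. Then any minimizer (β̂, α̂) satisfies, for each k = 1,…,h, β̂_k = (1/n)·Σ_{i=1}^n (y_{iτ+k} − Σ_{j=0}^q ĉ_{ij}·(τ+k)^j), where ĉ_i := (XᵀX)⁻¹·Xᵀ·(y_{i,τ−R+1},…,y_{i,τ}) is the coefficient vector of the individual pre-treatment OLS regression of y_{it} on 1, t, …, t^q over t ∈ {τ−R+1,…,τ}. In particular β̂_h equals the polynomial-regression FAT at horizon h. -/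
open Matrix Finset

/-!
The first-order condition of the pooled problem in the direction of a time dummy says that the
residuals at `τ + k`, summed over individuals, vanish. Summing the first-order conditions of the
individual trend coefficients over individuals, the post-treatment part therefore drops out, and
the aggregate trend `∑ᵢ α̂ᵢ` satisfies the normal equations of the pre-treatment regression of
`∑ᵢ yᵢ`. By linearity of OLS, `∑ᵢ α̂ᵢ = ∑ᵢ ĉᵢ`, and the dummy condition then solves for `β̂ k`.
-/

theorem sum_mul_eq_zero_of_forall_sum_sq_le {ι : Type*} (s : Finset ι) (r g : ι → ℝ)
    (h : ∀ ε : ℝ, ∑ i ∈ s, r i ^ 2 ≤ ∑ i ∈ s, (r i - ε * g i) ^ 2) :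
    ∑ i ∈ s, r i * g i = 0 := by
  have hquad : ∀ ε : ℝ,
      0 ≤ (∑ i ∈ s, g i ^ 2) * (ε * ε) + (-2 * ∑ i ∈ s, r i * g i) * ε + 0 := by
    intro ε
    have hexpand : ∑ i ∈ s, (r i - ε * g i) ^ 2 = ∑ i ∈ s, r i ^ 2
        + ((∑ i ∈ s, g i ^ 2) * (ε * ε) + (-2 * ∑ i ∈ s, r i * g i) * ε) := by
      simp only [sum_mul, mul_sum, ← sum_add_distrib]
      exact sum_congr rfl fun _ _ => by ring
    linarith [h ε]
  have hdiscrim := discrim_le_zero hquad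
  rw [discrim] at hdiscrim
  nlinarith [sq_nonneg (∑ i ∈ s, r i * g i)]

theorem sum_Icc_eq_sum_pre_add_sum_post {M : Type*} [AddCommMonoid M] (f : ℕ → M)
    {τ R : ℕ} (h : ℕ) (hR : R ≤ τ) :
    ∑ t ∈ Icc (τ - R + 1) (τ + h), f t
      = ∑ s : Fin R, f (τ - R + 1 + s) + ∑ k : Fin h, f (τ + 1 + k) := by
  have hIcc : Icc (τ - R + 1) (τ + h) = Ico (τ - R + 1) (τ - R + 1 + (R + h)) := by
    ext t; simp only [mem_Icc, mem_Ico]; omega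
  rw [hIcc, sum_Ico_eq_sum_range, Nat.add_sub_cancel_left, sum_range_add,
    Fin.sum_univ_eq_sum_range (fun s => f (τ - R + 1 + s)),
    Fin.sum_univ_eq_sum_range (fun k => f (τ + 1 + k))]
  congr 2 with k
  congr 1
  omega

section OLS

variable {m p K : Type*} [Fintype m] [Fintype p] [DecidableEq p] [CommRing K]

noncomputable def olsCoeff (X : Matrix m p K) (v : m → K) : p → K :=
  ((Xᵀ * X)⁻¹ * Xᵀ) *ᵥ v

theorem eq_olsCoeff_of_transpose_mulVec_sub_eq_zero {X : Matrix m p K}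
    (hX : IsUnit (Xᵀ * X)) {v : m → K} {a : p → K} (h : Xᵀ *ᵥ (v - X *ᵥ a) = 0) :
    a = olsCoeff X v := by
  rw [mulVec_sub, mulVec_mulVec, sub_eq_zero] at h
  rw [olsCoeff, ← mulVec_mulVec, h, mulVec_mulVec,
    nonsing_inv_mul _ ((isUnit_iff_isUnit_det _).mp hX), one_mulVec]

theorem olsCoeff_sum {ι : Type*} (X : Matrix m p K) (s : Finset ι) (v : ι → m → K) :
    olsCoeff X (∑ i ∈ s, v i) = ∑ i ∈ s, olsCoeff X (v i) :=
  mulVec_sum _ _ _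

end OLS

section PooledRegression

variable {n h m : ℕ}

/-- `k : Fin h` is the paper's horizon `k + 1`. -/
def dummyFit (τ : ℕ) (β : Fin h → ℝ) (t : ℕ) : ℝ :=
  ∑ k : Fin h, if t = τ + 1 + (k : ℕ) then β k else 0

def trendFit (a : Fin m → ℝ) (t : ℕ) : ℝ := a ⬝ᵥ fun k => (t : ℝ) ^ (k : ℕ)

theorem dummyFit_add_smul (τ : ℕ) (β d : Fin h → ℝ) (ε : ℝ) (t : ℕ) :
    dummyFit τ (β + ε • d) t = dummyFit τ β t + ε * dummyFit τ d t := by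
  simp only [dummyFit, mul_sum, ← sum_add_distrib]
  refine sum_congr rfl fun k _ => ?_
  split_ifs <;> simp

theorem dummyFit_of_le {τ t : ℕ} (β : Fin h → ℝ) (ht : t ≤ τ) : dummyFit τ β t = 0 :=
  sum_eq_zero fun _ _ => if_neg (by omega)

theorem dummyFit_post (τ : ℕ) (β : Fin h → ℝ) (k : Fin h) :
    dummyFit τ β (τ + 1 + k) = β k := by
  simp [dummyFit, Fin.val_inj]

theorem dummyFit_single (τ : ℕ) (k : Fin h) (t : ℕ) :
    dummyFit τ (Pi.single k 1) t = if t = τ + 1 + k then 1 else 0 := by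
  by_cases ht : t = τ + 1 + k
  · rw [ht, dummyFit_post, if_pos rfl, Pi.single_eq_same]
  · rw [if_neg ht]
    refine sum_eq_zero fun k' _ => ?_
    split_ifs with htk'
    · exact Pi.single_eq_of_ne (by rintro rfl; exact ht htk') _
    · rfl

theorem trendFit_add_smul (a d : Fin m → ℝ) (ε : ℝ) (t : ℕ) :
    trendFit (a + ε • d) t = trendFit a t + ε * trendFit d t := by
  simp only [trendFit, add_dotProduct, smul_dotProduct, smul_eq_mul]

theorem trendFit_single (j : Fin m) (t : ℕ) :
    trendFit (Pi.single j 1) t = (t : ℝ) ^ (j : ℕ) := by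
  simp [trendFit]

variable (τ R : ℕ) (y : Fin n → ℕ → ℝ)

def pooledResidual (β : Fin h → ℝ) (α : Fin n → Fin m → ℝ) (i : Fin n) (t : ℕ) :
    ℝ :=
  y i t - dummyFit τ β t - trendFit (α i) t

def pooledSSR (β : Fin h → ℝ) (α : Fin n → Fin m → ℝ) : ℝ :=
  ∑ i, ∑ t ∈ Icc (τ - R + 1) (τ + h), pooledResidual τ y β α i t ^ 2

theorem pooledResidual_add_smul (β dβ : Fin h → ℝ) (α dα : Fin n → Fin m → ℝ)
    (ε : ℝ) (i : Fin n) (t : ℕ) : pooledResidual τ y (β + ε • dβ) (α + ε • dα) i t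
      = pooledResidual τ y β α i t - ε * (dummyFit τ dβ t + trendFit (dα i) t) := by
  simp only [pooledResidual, dummyFit_add_smul, Pi.add_apply, Pi.smul_apply, trendFit_add_smul]
  ring

variable {τ R y} {βhat : Fin h → ℝ} {αhat : Fin n → Fin m → ℝ}

theorem sum_pooledResidual_mul_eq_zero
    (hmin : ∀ (β : Fin h → ℝ) (α : Fin n → Fin m → ℝ),
      pooledSSR τ R y βhat αhat ≤ pooledSSR τ R y β α)
    (dβ : Fin h → ℝ) (dα : Fin n → Fin m → ℝ) :
    ∑ i, ∑ t ∈ Icc (τ - R + 1) (τ + h),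
      pooledResidual τ y βhat αhat i t * (dummyFit τ dβ t + trendFit (dα i) t) = 0 := by
  rw [← sum_product']
  refine sum_mul_eq_zero_of_forall_sum_sq_le _ _ _ fun ε => ?_
  simpa only [pooledSSR, pooledResidual_add_smul, sum_product]
    using hmin (βhat + ε • dβ) (αhat + ε • dα)

theorem sum_pooledResidual_post_eq_zero
    (hmin : ∀ (β : Fin h → ℝ) (α : Fin n → Fin m → ℝ),
      pooledSSR τ R y βhat αhat ≤ pooledSSR τ R y β α)
    (k : Fin h) : ∑ i, pooledResidual τ y βhat αhat i (τ + 1 + k) = 0 := by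
  have hfoc := sum_pooledResidual_mul_eq_zero hmin (Pi.single k 1) 0
  simp only [dummyFit_single, trendFit, Pi.zero_apply, zero_dotProduct, add_zero, mul_ite, mul_one,
    mul_zero, sum_ite_eq'] at hfoc
  rwa [Fintype.sum_congr _ _ fun i => if_pos (mem_Icc.mpr ⟨by omega, by omega⟩)] at hfoc

theorem sum_sum_pooledResidual_mul_pow_eq_zero
    (hmin : ∀ (β : Fin h → ℝ) (α : Fin n → Fin m → ℝ),
      pooledSSR τ R y βhat αhat ≤ pooledSSR τ R y β α)
    (j : Fin m) :
    ∑ i, ∑ t ∈ Icc (τ - R + 1) (τ + h),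
      pooledResidual τ y βhat αhat i t * (t : ℝ) ^ (j : ℕ) = 0 := by
  simpa only [dummyFit, Pi.zero_apply, ite_self, sum_const_zero, zero_add, trendFit_single]
    using sum_pooledResidual_mul_eq_zero hmin 0 fun _ => Pi.single j 1

theorem pooledResidual_pre (hR : R ≤ τ) {X : Matrix (Fin R) (Fin m) ℝ}
    (hX : ∀ (s : Fin R) (k : Fin m), X s k = ((τ - R + 1 + s : ℕ) : ℝ) ^ (k : ℕ))
    (β : Fin h → ℝ) (α : Fin n → Fin m → ℝ) (i : Fin n) (s : Fin R) :
    pooledResidual τ y β α i (τ - R + 1 + s) = y i (τ - R + 1 + s) - (X *ᵥ α i) s := by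
  rw [pooledResidual, dummyFit_of_le _ (by omega), sub_zero, trendFit, dotProduct_comm]
  simp only [mulVec, hX]

theorem sum_trend_normal_equation (hR : R ≤ τ) {X : Matrix (Fin R) (Fin m) ℝ}
    (hX : ∀ (s : Fin R) (k : Fin m), X s k = ((τ - R + 1 + s : ℕ) : ℝ) ^ (k : ℕ))
    (hmin : ∀ (β : Fin h → ℝ) (α : Fin n → Fin m → ℝ),
      pooledSSR τ R y βhat αhat ≤ pooledSSR τ R y β α) :
    Xᵀ *ᵥ (∑ i, (fun s : Fin R => y i (τ - R + 1 + s)) - X *ᵥ ∑ i, αhat i) = 0 := by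
  have hpre : ∀ s : Fin R, ∑ i, pooledResidual τ y βhat αhat i (τ - R + 1 + s)
      = (∑ i, (fun s : Fin R => y i (τ - R + 1 + s)) - X *ᵥ ∑ i, αhat i) s := by
    intro s
    simp only [pooledResidual_pre hR hX, sum_sub_distrib, Pi.sub_apply, mulVec_sum,
      Finset.sum_apply]
  ext j
  have hfoc := sum_sum_pooledResidual_mul_pow_eq_zero hmin j
  rw [sum_comm, sum_Icc_eq_sum_pre_add_sum_post _ h hR] at hfoc
  simp only [← sum_mul, sum_pooledResidual_post_eq_zero hmin, zero_mul, sum_const_zero, add_zero,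
    hpre, ← hX] at hfoc
  rw [Pi.zero_apply, ← hfoc]
  simp only [mulVec, dotProduct, transpose_apply, mul_comm]

theorem eq_mean_sub_trendFit (hn : 0 < n)
    (hmin : ∀ (β : Fin h → ℝ) (α : Fin n → Fin m → ℝ),
      pooledSSR τ R y βhat αhat ≤ pooledSSR τ R y β α)
    {c : Fin n → Fin m → ℝ} (hc : ∑ i, αhat i = ∑ i, c i) (k : Fin h) :
    βhat k = 1 / (n : ℝ) * ∑ i, (y i (τ + 1 + k) - trendFit (c i) (τ + 1 + k)) := by
  have hpost := sum_pooledResidual_post_eq_zero hmin k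
  simp only [pooledResidual, dummyFit_post, sum_sub_distrib, sum_const, card_univ,
    Fintype.card_fin, nsmul_eq_mul] at hpost
  have htrend : ∑ i, trendFit (αhat i) (τ + 1 + k) = ∑ i, trendFit (c i) (τ + 1 + k) := by
    simp only [trendFit, ← sum_dotProduct, hc]
  have hn' : (n : ℝ) ≠ 0 := by positivity
  rw [sum_sub_distrib, ← htrend]
  field_simp
  linarith

end PooledRegression

theorem pooled_regression_equivalence_general
    (n τ R q h : ℕ) (hn : 1 ≤ n) (hRτ : R ≤ τ)
    (y : Fin n → ℕ → ℝ)
    (X : Matrix (Fin R) (Fin (q + 1)) ℝ)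
    (hX : ∀ (s : Fin R) (k : Fin (q + 1)),
      X s k = ((τ - R + 1 + (s : ℕ) : ℕ) : ℝ) ^ (k : ℕ))
    (hinv : IsUnit (Xᵀ * X))
    (chat : Fin n → Fin (q + 1) → ℝ)
    (hchat : ∀ i, chat i
      = ((Xᵀ * X)⁻¹ * Xᵀ).mulVec (fun s => y i (τ - R + 1 + (s : ℕ))))
    (obj : (Fin h → ℝ) → (Fin n → Fin (q + 1) → ℝ) → ℝ)
    (hobj : ∀ (β : Fin h → ℝ) (α : Fin n → Fin (q + 1) → ℝ),
      obj β α = ∑ i : Fin n, ∑ t ∈ Finset.Icc (τ - R + 1) (τ + h),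
        (y i t - (∑ k : Fin h, if t = τ + 1 + (k : ℕ) then β k else 0)
          - ∑ k : Fin (q + 1), α i k * (t : ℝ) ^ (k : ℕ)) ^ 2)
    (βhat : Fin h → ℝ) (αhat : Fin n → Fin (q + 1) → ℝ)
    (hmin : ∀ (β : Fin h → ℝ) (α : Fin n → Fin (q + 1) → ℝ),
      obj βhat αhat ≤ obj β α) :
    ∀ k : Fin h,
      βhat k = (1 / (n : ℝ)) * ∑ i : Fin n,
        (y i (τ + 1 + (k : ℕ))
          - ∑ j : Fin (q + 1), chat i j * ((τ + 1 + (k : ℕ) : ℕ) : ℝ) ^ (j : ℕ)) := by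
  have hminSSR : ∀ (β : Fin h → ℝ) (α : Fin n → Fin (q + 1) → ℝ),
      pooledSSR τ R y βhat αhat ≤ pooledSSR τ R y β α := by
    intro β α
    have hle := hmin β α
    rwa [hobj, hobj] at hle
  have hα : ∑ i, αhat i = ∑ i, chat i := by
    rw [eq_olsCoeff_of_transpose_mulVec_sub_eq_zero hinv
      (sum_trend_normal_equation hRτ hX hminSSR), olsCoeff_sum]
    exact sum_congr rfl fun i _ => (hchat i).symm
  exact eq_mean_sub_trendFit hn hminSSR hα

/-- **Pooled-regression equivalence (second alternative, equation (19)).**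
Consider the pooled least-squares problem of regressing a balanced panel
`y i t` (for `i = 1, …, n` and `t = τ−R+1, …, τ+h`) on post-treatment time
dummies `1{t = τ+k}` (`k = 1, …, h`) and individual-specific polynomial time
trends of order `q`, where `q+1 ≤ R ≤ τ` and the pre-treatment polynomial
design matrix `X` (`X s k = (τ−R+1+s)^k`) has `XᵀX` invertible. Then any
minimizer `(β̂, α̂)` of the pooled objective satisfies, for each `k = 1, …, h`,
`β̂ k = (1/n) ∑ᵢ (y i (τ+k) − ∑ⱼ ĉ i j (τ+k)^j)`, where `ĉ i = (XᵀX)⁻¹ Xᵀ yᵢ`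
are the individual pre-treatment OLS coefficients. In particular, `β̂` at the
last horizon equals the polynomial-regression FAT at horizon `h`. -/
theorem pooled_regression_equivalence
    (n τ R q h : ℕ) (hn : 1 ≤ n) (hh : 1 ≤ h) (hR : q + 1 ≤ R) (hRτ : R ≤ τ)
    (y : Fin n → ℕ → ℝ)
    (X : Matrix (Fin R) (Fin (q + 1)) ℝ)
    (hX : ∀ (s : Fin R) (k : Fin (q + 1)),
      X s k = ((τ - R + 1 + (s : ℕ) : ℕ) : ℝ) ^ (k : ℕ))
    (hinv : IsUnit (Xᵀ * X))
    (chat : Fin n → Fin (q + 1) → ℝ)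
    (hchat : ∀ i, chat i
      = ((Xᵀ * X)⁻¹ * Xᵀ).mulVec (fun s => y i (τ - R + 1 + (s : ℕ))))
    (obj : (Fin h → ℝ) → (Fin n → Fin (q + 1) → ℝ) → ℝ)
    (hobj : ∀ (β : Fin h → ℝ) (α : Fin n → Fin (q + 1) → ℝ),
      obj β α = ∑ i : Fin n, ∑ t ∈ Finset.Icc (τ - R + 1) (τ + h),
        (y i t - (∑ k : Fin h, if t = τ + 1 + (k : ℕ) then β k else 0)
          - ∑ k : Fin (q + 1), α i k * (t : ℝ) ^ (k : ℕ)) ^ 2)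
    (βhat : Fin h → ℝ) (αhat : Fin n → Fin (q + 1) → ℝ)
    (hmin : ∀ (β : Fin h → ℝ) (α : Fin n → Fin (q + 1) → ℝ),
      obj βhat αhat ≤ obj β α) :
    ∀ k : Fin h,
      βhat k = (1 / (n : ℝ)) * ∑ i : Fin n,
        (y i (τ + 1 + (k : ℕ))
          - ∑ j : Fin (q + 1), chat i j * ((τ + 1 + (k : ℕ) : ℕ) : ℝ) ^ (j : ℕ)) :=
  pooled_regression_equivalence_general n τ R q h hn hRτ y X hX hinv chat hchat obj hobj βhat αhat
    hmin
end

section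
/- Identification of the ATT with a control group (DFAT): Define DFAT := (1/n₁)·Σ_{i=1}^{n₁} (Y_i − Ŷ_i) − (1/n₀)·Σ_{j=1}^{n₀} (Z_j − Ẑ_j). If the average forecast biases of the two groups are equal, i.e. (1/n₁)·Σ_{i=1}^{n₁} E[Y⁰_i − Ŷ_i] = (1/n₀)·Σ_{j=1}^{n₀} E[Z_j − Ẑ_j], then E[DFAT] = (1/n₁)·Σ_{i=1}^{n₁} E[Y_i − Y⁰_i], i.e. the expected DFAT equals the average treatment effect on the treated. -/
open MeasureTheory

/-! Telescoping `Y - Ŷ = (Y - Y⁰) + (Y⁰ - Ŷ)` splits the treated group's expected forecast error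
into the ATT plus its forecast bias; by hypothesis that bias is the control group's expected
forecast error, which the second term of DFAT subtracts off. -/

section

variable {Ω ι : Type*} [MeasurableSpace Ω] {μ : Measure Ω}

theorem integral_const_mul_sum [Fintype ι] (c : ℝ) {f : ι → Ω → ℝ}
    (hf : ∀ i, Integrable (f i) μ) :
    ∫ ω, c * ∑ i, f i ω ∂μ = c * ∑ i, ∫ ω, f i ω ∂μ := by
  rw [integral_const_mul, integral_finsetSum _ fun i _ => hf i]

theorem integral_sub_eq_integral_sub_add_integral_sub {f g h : Ω → ℝ}
    (hf : Integrable f μ) (hg : Integrable g μ) (hh : Integrable h μ) :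
    ∫ ω, (f ω - h ω) ∂μ = ∫ ω, (f ω - g ω) ∂μ + ∫ ω, (g ω - h ω) ∂μ := by
  rw [integral_sub hf hh, integral_sub hf hg, integral_sub hg hh]
  ring

end

theorem expected_DFAT_eq_ATT_general
    {Ω : Type*} [MeasurableSpace Ω] (μ : Measure Ω)
    (n₁ n₀ : ℕ)
    (Y Y0 Yhat : Fin n₁ → Ω → ℝ) (Z Zhat : Fin n₀ → Ω → ℝ)
    (hY : ∀ i, Integrable (Y i) μ)
    (hY0 : ∀ i, Integrable (Y0 i) μ)
    (hYhat : ∀ i, Integrable (Yhat i) μ)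
    (hZ : ∀ j, Integrable (Z j) μ)
    (hZhat : ∀ j, Integrable (Zhat j) μ)
    (hbias : (1 / (n₁ : ℝ)) * ∑ i, ∫ ω, (Y0 i ω - Yhat i ω) ∂μ
      = (1 / (n₀ : ℝ)) * ∑ j, ∫ ω, (Z j ω - Zhat j ω) ∂μ) :
    ∫ ω, ((1 / (n₁ : ℝ)) * ∑ i, (Y i ω - Yhat i ω)
          - (1 / (n₀ : ℝ)) * ∑ j, (Z j ω - Zhat j ω)) ∂μ
      = (1 / (n₁ : ℝ)) * ∑ i, ∫ ω, (Y i ω - Y0 i ω) ∂μ := by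
  have hYerr : ∀ i, Integrable (fun ω => Y i ω - Yhat i ω) μ := fun i => (hY i).sub (hYhat i)
  have hZerr : ∀ j, Integrable (fun ω => Z j ω - Zhat j ω) μ := fun j => (hZ j).sub (hZhat j)
  have htreated := (integrable_finsetSum Finset.univ fun i _ => hYerr i).const_mul (1 / (n₁ : ℝ))
  have hcontrol := (integrable_finsetSum Finset.univ fun j _ => hZerr j).const_mul (1 / (n₀ : ℝ))
  rw [integral_sub htreated hcontrol, integral_const_mul_sum _ hYerr,
    integral_const_mul_sum _ hZerr, ← hbias]
  have hsplit : ∀ i, ∫ ω, (Y i ω - Yhat i ω) ∂μ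
      = ∫ ω, (Y i ω - Y0 i ω) ∂μ + ∫ ω, (Y0 i ω - Yhat i ω) ∂μ := fun i =>
    integral_sub_eq_integral_sub_add_integral_sub (hY i) (hY0 i) (hYhat i)
  simp only [hsplit, Finset.sum_add_distrib]
  ring

/-- **Identification of the ATT with a control group (DFAT).**
With `n₁` treated units (outcomes `Y i`, counterfactuals `Y0 i`, forecasts
`Yhat i`) and `n₀` control units (outcomes `Z j`, forecasts `Zhat j`), define
`DFAT := (1/n₁) ∑ᵢ (Y i − Yhat i) − (1/n₀) ∑ⱼ (Z j − Zhat j)`. If the average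
forecast biases of the two groups are equal, i.e.
`(1/n₁) ∑ᵢ E[Y0 i − Yhat i] = (1/n₀) ∑ⱼ E[Z j − Zhat j]`, then
`E[DFAT] = (1/n₁) ∑ᵢ E[Y i − Y0 i]`, the average treatment effect on the
treated. -/
theorem expected_DFAT_eq_ATT
    {Ω : Type*} [MeasurableSpace Ω] (μ : Measure Ω) [IsProbabilityMeasure μ]
    (n₁ n₀ : ℕ) (hn₁ : 1 ≤ n₁) (hn₀ : 1 ≤ n₀)
    (Y Y0 Yhat : Fin n₁ → Ω → ℝ) (Z Zhat : Fin n₀ → Ω → ℝ)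
    (hY : ∀ i, Integrable (Y i) μ)
    (hY0 : ∀ i, Integrable (Y0 i) μ)
    (hYhat : ∀ i, Integrable (Yhat i) μ)
    (hZ : ∀ j, Integrable (Z j) μ)
    (hZhat : ∀ j, Integrable (Zhat j) μ)
    (hbias : (1 / (n₁ : ℝ)) * ∑ i, ∫ ω, (Y0 i ω - Yhat i ω) ∂μ
      = (1 / (n₀ : ℝ)) * ∑ j, ∫ ω, (Z j ω - Zhat j ω) ∂μ) :
    ∫ ω, ((1 / (n₁ : ℝ)) * ∑ i, (Y i ω - Yhat i ω)
          - (1 / (n₀ : ℝ)) * ∑ j, (Z j ω - Zhat j ω)) ∂μ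
      = (1 / (n₁ : ℝ)) * ∑ i, ∫ ω, (Y i ω - Y0 i ω) ∂μ :=
  expected_DFAT_eq_ATT_general μ n₁ n₀ Y Y0 Yhat Z Zhat hY hY0 hYhat hZ hZhat hbias
end
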